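/- If μₙ is a sequence in PF(A,B,ℝ^d) converging weakly in the 2-Wasserstein sense to μ ∈ P₂(ℝ^d) (weak convergence of measures together with convergence of second moments), then μ ∈ PF(A,B,ℝ^d). Hence PF(A,B,ℝ^d) is closed in the Wasserstein space. -/

import Mathlib

/-!
For a fixed `x`, put `f y = ⟪x, y⟫²` and `q y = ‖x‖² ‖y‖²`, so that `0 ≤ f ≤ q`. Weak convergence
alone makes `ν ↦ ∫ g ∂ν` lower semicontinuous along the sequence for every continuous `g ≥ 0`
(truncate `g` at height `R`, pass to the limit, then let `R → ∞`). Applied to `f` this gives the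
upper frame bound. Applied to `q - f`, whose integrals converge to those of `q` thanks to the
convergence of second moments, it shows that `∫ f` cannot drop in the limit, which gives the
lower frame bound.
-/

open MeasureTheory Filter
open scoped RealInnerProductSpace BoundedContinuousFunction

/-- μ ∈ PF(A,B,ℝ^d): a probability measure with frame bounds A, B. -/
def memPF {d : ℕ} (A B : ℝ) (μ : Measure (EuclideanSpace ℝ (Fin d))) : Prop :=
  IsProbabilityMeasure μ ∧
    ∀ x : EuclideanSpace ℝ (Fin d),
      A * ‖x‖ ^ 2 ≤ (∫ y, ⟪x, y⟫ ^ 2 ∂μ) ∧ (∫ y, ⟪x, y⟫ ^ 2 ∂μ) ≤ B * ‖x‖ ^ 2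

open Topology

section Truncation

variable {X : Type*} [MeasurableSpace X] {μ : Measure X}

theorem tendsto_integral_min_natCast {g : X → ℝ} (hg : Integrable g μ) :
    Tendsto (fun R : ℕ => ∫ x, min (g x) R ∂μ) atTop (𝓝 (∫ x, g x ∂μ)) := by
  refine tendsto_integral_of_dominated_convergence (fun x => ‖g x‖)
    (fun R => hg.aestronglyMeasurable.inf aestronglyMeasurable_const) hg.norm
    (fun R => ae_of_all _ fun x => ?_) (ae_of_all _ fun x => ?_)
  · rw [Real.norm_eq_abs, Real.norm_eq_abs, abs_le]
    constructor
    · exact le_min (neg_abs_le _) ((neg_nonpos.2 (abs_nonneg _)).trans R.cast_nonneg)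
    · exact (min_le_left _ _).trans (le_abs_self _)
  · refine tendsto_const_nhds.congr' ?_
    filter_upwards [tendsto_natCast_atTop_atTop.eventually_ge_atTop (g x)] with R hR
    exact (min_eq_left hR).symm

variable [TopologicalSpace X]

theorem integral_le_of_tendsto_of_forall_le {ι : Type*} {l : Filter ι} [l.NeBot]
    {μs : ι → Measure X}
    (hweak : ∀ f : X →ᵇ ℝ, Tendsto (fun i => ∫ x, f x ∂μs i) l (𝓝 (∫ x, f x ∂μ)))
    {g : X → ℝ} (hg : Continuous g) (hg0 : 0 ≤ g) (hgμ : Integrable g μ)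
    (hgμs : ∀ i, Integrable g (μs i)) {c : ι → ℝ} {L : ℝ} (hc : Tendsto c l (𝓝 L))
    (hle : ∀ i, ∫ x, g x ∂μs i ≤ c i) :
    ∫ x, g x ∂μ ≤ L := by
  refine le_of_tendsto' (tendsto_integral_min_natCast hgμ) fun R => ?_
  let gR : X →ᵇ ℝ := .ofNormedAddCommGroup (fun x => min (g x) R) (hg.min continuous_const) R
    fun x => by
      rw [Real.norm_eq_abs, abs_of_nonneg (le_min (hg0 x) R.cast_nonneg)]
      exact min_le_right _ _
  refine le_of_tendsto_of_tendsto' (hweak gR) hc fun i => ?_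
  calc ∫ x, gR x ∂μs i
      ≤ ∫ x, g x ∂μs i := integral_mono_of_nonneg
        (ae_of_all _ fun x => le_min (hg0 x) R.cast_nonneg) (hgμs i)
        (ae_of_all _ fun x => min_le_left _ _)
    _ ≤ c i := hle i

end Truncation

section Inner

variable {E : Type*} [NormedAddCommGroup E] [InnerProductSpace ℝ E]

theorem real_inner_sq_le_norm_sq_mul_norm_sq (x y : E) : ⟪x, y⟫ ^ 2 ≤ ‖x‖ ^ 2 * ‖y‖ ^ 2 := by
  rw [← mul_pow, ← sq_abs]
  exact pow_le_pow_left₀ (abs_nonneg _) (abs_real_inner_le_norm x y) 2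

variable [MeasurableSpace E] [OpensMeasurableSpace E]

theorem MeasureTheory.Integrable.real_inner_sq {ν : Measure E}
    (h : Integrable (fun y => ‖y‖ ^ 2) ν) (x : E) : Integrable (fun y => ⟪x, y⟫ ^ 2) ν :=
  (h.const_mul (‖x‖ ^ 2)).mono'
    ((continuous_const.inner continuous_id).pow 2).aestronglyMeasurable
    (ae_of_all _ fun y => by
      rw [Real.norm_eq_abs, abs_of_nonneg (sq_nonneg _)]
      exact real_inner_sq_le_norm_sq_mul_norm_sq x y)

end Inner

theorem stmt2_general {d : ℕ} (A B : ℝ)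
    (μn : ℕ → Measure (EuclideanSpace ℝ (Fin d))) (μ : Measure (EuclideanSpace ℝ (Fin d)))
    [IsProbabilityMeasure μ]
    (hμ2 : Integrable (fun x : EuclideanSpace ℝ (Fin d) => ‖x‖ ^ 2) μ)
    (hn : ∀ n, memPF A B (μn n))
    (hn2 : ∀ n, Integrable (fun x : EuclideanSpace ℝ (Fin d) => ‖x‖ ^ 2) (μn n))
    (hweak : ∀ f : EuclideanSpace ℝ (Fin d) →ᵇ ℝ,
      Tendsto (fun n => ∫ x, f x ∂(μn n)) atTop (nhds (∫ x, f x ∂μ)))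
    (hmom : Tendsto (fun n => ∫ x, ‖x‖ ^ 2 ∂(μn n)) atTop (nhds (∫ x, ‖x‖ ^ 2 ∂μ))) :
    memPF A B μ := by
  refine ⟨inferInstance, fun x => ?_⟩
  have hf_cont : Continuous fun y : EuclideanSpace ℝ (Fin d) => ⟪x, y⟫ ^ 2 :=
    (continuous_const.inner continuous_id).pow 2
  have hsplit : ∀ ν, Integrable (fun y : EuclideanSpace ℝ (Fin d) => ‖y‖ ^ 2) ν →
      ∫ y, ‖x‖ ^ 2 * ‖y‖ ^ 2 - ⟪x, y⟫ ^ 2 ∂ν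
        = ‖x‖ ^ 2 * ∫ y, ‖y‖ ^ 2 ∂ν - ∫ y, ⟪x, y⟫ ^ 2 ∂ν := fun ν h => by
    rw [integral_sub (h.const_mul _) (h.real_inner_sq x), integral_const_mul]
  constructor
  · have h := integral_le_of_tendsto_of_forall_le hweak
      (g := fun y => ‖x‖ ^ 2 * ‖y‖ ^ 2 - ⟪x, y⟫ ^ 2)
      ((continuous_const.mul (continuous_norm.pow 2)).sub hf_cont)
      (fun y => sub_nonneg.2 (real_inner_sq_le_norm_sq_mul_norm_sq x y))
      ((hμ2.const_mul _).sub (hμ2.real_inner_sq x))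
      (fun n => ((hn2 n).const_mul _).sub ((hn2 n).real_inner_sq x))
      ((hmom.const_mul (‖x‖ ^ 2)).sub_const (A * ‖x‖ ^ 2))
      (fun n => by rw [hsplit _ (hn2 n)]; linarith [((hn n).2 x).1])
    rw [hsplit _ hμ2] at h
    linarith
  · exact integral_le_of_tendsto_of_forall_le hweak hf_cont (fun y => sq_nonneg _)
      (hμ2.real_inner_sq x) (fun n => (hn2 n).real_inner_sq x) tendsto_const_nhds
      (fun n => ((hn n).2 x).2)

/-- PF(A,B,ℝ^d) is closed under Wasserstein convergence (weak convergence together with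
convergence of second moments): a limit in P₂(ℝ^d) of a sequence in PF(A,B,ℝ^d) is again
in PF(A,B,ℝ^d). -/
theorem stmt2 {d : ℕ} (A B : ℝ) (hA : 0 < A) (hAB : A ≤ B)
    (μn : ℕ → Measure (EuclideanSpace ℝ (Fin d))) (μ : Measure (EuclideanSpace ℝ (Fin d)))
    [IsProbabilityMeasure μ]
    (hμ2 : Integrable (fun x : EuclideanSpace ℝ (Fin d) => ‖x‖ ^ 2) μ)
    (hn : ∀ n, memPF A B (μn n))
    (hn2 : ∀ n, Integrable (fun x : EuclideanSpace ℝ (Fin d) => ‖x‖ ^ 2) (μn n))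
    (hweak : ∀ f : EuclideanSpace ℝ (Fin d) →ᵇ ℝ,
      Tendsto (fun n => ∫ x, f x ∂(μn n)) atTop (nhds (∫ x, f x ∂μ)))
    (hmom : Tendsto (fun n => ∫ x, ‖x‖ ^ 2 ∂(μn n)) atTop (nhds (∫ x, ‖x‖ ^ 2 ∂μ))) :
    memPF A B μ :=
  stmt2_general A B μn μ hμ2 hn hn2 hweak hmom
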